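/- Let p be any probability distribution on {1,...,M_x} × {1,...,M_y}, let α ∈ (0,1], and let p̂_n be the empirical distribution of an i.i.d. sample of size n from p, with marginals p̂_{n,X} and p̂_{n,Y}. Set ε = sqrt((2/n)·ln((2^{M_x·M_y} − 2)/α)) and define I_min = min{H(r) : V(p̂_{n,X}, r) ≤ ε} + min{H(r) : V(p̂_{n,Y}, r) ≤ ε} − max{H(s) : V(p̂_n, s) ≤ ε} and I_max = max{H(r) : V(p̂_{n,X}, r) ≤ ε} + max{H(r) : V(p̂_{n,Y}, r) ≤ ε} − min{H(s) : V(p̂_n, s) ≤ ε}, where the optimizations over r range over probability distributions on {1,...,M_x} (respectively {1,...,M_y}) and those over s range over probability distributions on {1,...,M_x} × {1,...,M_y}. Then Pr{ I_min ≤ I(p) ≤ I_max } ≥ 1 − α, where I denotes mutual information. -/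

import Mathlib

/-!
On the event `V(p̂ₙ, p) ≤ ε` the true distribution `p` is one of the candidates in the joint
`ε`-ball, and since marginalizing does not increase variational distance its marginals are
candidates in the marginal balls; so each of the three entropies in `I(p)` is bracketed by the
optimized values and `I_min ≤ I(p) ≤ I_max`. For the complementary event, `V(q, p)` is twice the
largest excess `q(A) - p(A)` over nonempty proper subsets `A`; for a fixed `A` Hoeffding's
inequality bounds `P(p̂ₙ(A) - p(A) > ε/2)` by `exp(-nε²/2)`, and a union bound over the
`2^(Mx·My) - 2` such subsets gives exactly `α` for the chosen `ε`.
-/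

open scoped BigOperators
open MeasureTheory

/-- `p` is a probability distribution on the finite type `α`. -/
def IsDist {α : Type*} [Fintype α] (p : α → ℝ) : Prop :=
  (∀ a, 0 ≤ p a) ∧ ∑ a, p a = 1

/-- Shannon entropy (natural logarithm, with `0 · log 0 = 0`). -/
noncomputable def entropy {α : Type*} [Fintype α] (p : α → ℝ) : ℝ :=
  -∑ a, p a * Real.log (p a)

/-- Variational distance between two distributions on the same finite set. -/
noncomputable def Vdist {α : Type*} [Fintype α] (p q : α → ℝ) : ℝ :=
  ∑ a, |p a - q a|

/-- First marginal of a joint distribution. -/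
noncomputable def margX {Mx My : ℕ} (p : Fin Mx × Fin My → ℝ) : Fin Mx → ℝ :=
  fun i => ∑ j, p (i, j)

/-- Second marginal of a joint distribution. -/
noncomputable def margY {Mx My : ℕ} (p : Fin Mx × Fin My → ℝ) : Fin My → ℝ :=
  fun j => ∑ i, p (i, j)

/-- Mutual information of a joint distribution. -/
noncomputable def mutInfo {Mx My : ℕ} (p : Fin Mx × Fin My → ℝ) : ℝ :=
  entropy (margX p) + entropy (margY p) - entropy p

/-- Binary entropy function. -/
noncomputable def binEnt (x : ℝ) : ℝ :=
  -x * Real.log x - (1 - x) * Real.log (1 - x)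

/-- The measure on a finite type induced by a (real-valued) distribution `p`. -/
noncomputable def distMeasure {α : Type*} [Fintype α] [MeasurableSpace α]
    (p : α → ℝ) : Measure α :=
  ∑ a : α, ENNReal.ofReal (p a) • Measure.dirac a

/-- The empirical distribution of the sample `Z 0 ω, …, Z (n-1) ω`. -/
noncomputable def empDist {α : Type*} [Fintype α] [DecidableEq α] {Ω : Type*} {n : ℕ}
    (Z : Fin n → Ω → α) (ω : Ω) : α → ℝ :=
  fun a => ((Finset.univ.filter fun k => Z k ω = a).card : ℝ) / n


open ProbabilityTheory Real Finset

section Entropy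

variable {α : Type*} [Fintype α]

lemma IsDist.nonempty {p : α → ℝ} (hp : IsDist p) : Nonempty α := by
  obtain ⟨a, -, -⟩ := exists_ne_zero_of_sum_ne_zero (hp.2.trans_ne one_ne_zero)
  exact ⟨a⟩

lemma IsDist.le_one {p : α → ℝ} (hp : IsDist p) (a : α) : p a ≤ 1 :=
  hp.2 ▸ single_le_sum (fun b _ => hp.1 b) (mem_univ a)

lemma entropy_eq_sum_negMulLog (p : α → ℝ) : entropy p = ∑ a, negMulLog (p a) := by
  simp [entropy, negMulLog]

lemma entropy_nonneg {p : α → ℝ} (hp : IsDist p) : 0 ≤ entropy p := by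
  rw [entropy_eq_sum_negMulLog]
  exact sum_nonneg fun a _ => negMulLog_nonneg (hp.1 a) (hp.le_one a)

lemma entropy_le_card_sub_one {p : α → ℝ} (hp : IsDist p) :
    entropy p ≤ Fintype.card α - 1 :=
  calc entropy p ≤ ∑ a, (1 - p a) := by
        rw [entropy_eq_sum_negMulLog]
        exact sum_le_sum fun a _ => negMulLog_le_one_sub_self (hp.1 a)
    _ = Fintype.card α - 1 := by simp [sum_sub_distrib, hp.2]

def entropiesNear (q : α → ℝ) (ε : ℝ) : Set ℝ :=
  {x | ∃ r : α → ℝ, IsDist r ∧ Vdist q r ≤ ε ∧ x = entropy r}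

lemma bddBelow_entropiesNear (q : α → ℝ) (ε : ℝ) : BddBelow (entropiesNear q ε) :=
  ⟨0, by rintro _ ⟨r, hr, -, rfl⟩; exact entropy_nonneg hr⟩

lemma bddAbove_entropiesNear (q : α → ℝ) (ε : ℝ) : BddAbove (entropiesNear q ε) :=
  ⟨Fintype.card α - 1, by rintro _ ⟨r, hr, -, rfl⟩; exact entropy_le_card_sub_one hr⟩

lemma csInf_entropiesNear_le {q r : α → ℝ} {ε : ℝ} (hr : IsDist r) (h : Vdist q r ≤ ε) :
    sInf (entropiesNear q ε) ≤ entropy r :=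
  csInf_le (bddBelow_entropiesNear q ε) ⟨r, hr, h, rfl⟩

lemma entropy_le_csSup_entropiesNear {q r : α → ℝ} {ε : ℝ} (hr : IsDist r)
    (h : Vdist q r ≤ ε) :
    entropy r ≤ sSup (entropiesNear q ε) :=
  le_csSup (bddAbove_entropiesNear q ε) ⟨r, hr, h, rfl⟩

end Entropy

section Marginals

variable {Mx My : ℕ}

lemma IsDist.margX {p : Fin Mx × Fin My → ℝ} (hp : IsDist p) : IsDist (margX p) :=
  ⟨fun _ => sum_nonneg fun _ _ => hp.1 _, by rw [← hp.2, Fintype.sum_prod_type]; rfl⟩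

lemma IsDist.margY {p : Fin Mx × Fin My → ℝ} (hp : IsDist p) : IsDist (margY p) :=
  ⟨fun _ => sum_nonneg fun _ _ => hp.1 _, by rw [← hp.2, Fintype.sum_prod_type, sum_comm]; rfl⟩

lemma Vdist_margX_le (q p : Fin Mx × Fin My → ℝ) : Vdist (margX q) (margX p) ≤ Vdist q p := by
  rw [Vdist, Vdist, Fintype.sum_prod_type]
  refine sum_le_sum fun i _ => ?_
  rw [margX, margX, ← sum_sub_distrib]
  exact abs_sum_le_sum_abs _ _

lemma Vdist_margY_le (q p : Fin Mx × Fin My → ℝ) : Vdist (margY q) (margY p) ≤ Vdist q p := by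
  rw [Vdist, Vdist, Fintype.sum_prod_type, sum_comm]
  refine sum_le_sum fun j _ => ?_
  rw [margY, margY, ← sum_sub_distrib]
  exact abs_sum_le_sum_abs _ _

theorem mutInfo_bounds_of_Vdist_le {q p : Fin Mx × Fin My → ℝ} (hp : IsDist p) {ε : ℝ}
    (h : Vdist q p ≤ ε) :
    sInf (entropiesNear (margX q) ε) + sInf (entropiesNear (margY q) ε)
        - sSup (entropiesNear q ε) ≤ mutInfo p ∧
      mutInfo p ≤ sSup (entropiesNear (margX q) ε) + sSup (entropiesNear (margY q) ε)
        - sInf (entropiesNear q ε) := by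
  have hX := (Vdist_margX_le q p).trans h
  have hY := (Vdist_margY_le q p).trans h
  have := csInf_entropiesNear_le hp.margX hX
  have := csInf_entropiesNear_le hp.margY hY
  have := csInf_entropiesNear_le hp h
  have := entropy_le_csSup_entropiesNear hp.margX hX
  have := entropy_le_csSup_entropiesNear hp.margY hY
  have := entropy_le_csSup_entropiesNear hp h
  constructor <;> rw [mutInfo] <;> linarith

end Marginals

section Deviation

variable {γ : Type*} [Fintype γ]

lemma Vdist_eq_two_mul_sum_filter {q p : γ → ℝ} (h : ∑ a, q a = ∑ a, p a) :
    Vdist q p = 2 * ∑ a ∈ univ.filter (fun a => 0 < q a - p a), (q a - p a) := by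
  have habs (x : ℝ) : |x| = 2 * (if 0 < x then x else 0) - x := by
    split_ifs with hx
    · rw [abs_of_pos hx]; ring
    · rw [abs_of_nonpos (not_lt.mp hx)]; ring
  have hsum : ∑ a, (q a - p a) = 0 := by rw [sum_sub_distrib, h, sub_self]
  rw [Vdist, sum_filter, mul_sum]
  simp_rw [habs]
  rw [sum_sub_distrib, hsum, sub_zero]

lemma exists_nontrivial_subset_lt_sum_sub [DecidableEq γ] {q p : γ → ℝ}
    (h : ∑ a, q a = ∑ a, p a) {ε : ℝ} (hε : 0 ≤ ε) (hV : ε < Vdist q p) :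
    ∃ A ∈ (univ.powerset.erase ∅).erase univ, ε / 2 < ∑ a ∈ A, (q a - p a) := by
  set A := univ.filter fun a => 0 < q a - p a
  have hA : ε / 2 < ∑ a ∈ A, (q a - p a) := by
    rw [Vdist_eq_two_mul_sum_filter h] at hV
    linarith
  refine ⟨A, mem_erase.2 ⟨?_, mem_erase.2 ⟨?_, mem_powerset.2 (subset_univ A)⟩⟩, hA⟩
  · intro hAu
    rw [hAu, sum_sub_distrib, h, sub_self] at hA
    linarith
  · intro hA0
    rw [hA0, sum_empty] at hA
    linarith

lemma card_nontrivial_subsets [DecidableEq γ] [Nonempty γ] :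
    ((univ.powerset.erase ∅).erase (univ : Finset γ)).card = 2 ^ Fintype.card γ - 2 := by
  rw [card_erase_of_mem, card_erase_of_mem (empty_mem_powerset _), card_powerset, card_univ,
    Nat.sub_sub]
  exact mem_erase.2 ⟨univ_nonempty.ne_empty, mem_powerset_self _⟩

lemma sum_empDist [DecidableEq γ] {Ω : Type*} {n : ℕ} (Z : Fin n → Ω → γ) (ω : Ω)
    (A : Finset γ) :
    ∑ a ∈ A, empDist Z ω a = (∑ k, (A : Set γ).indicator 1 (Z k ω)) / n := by
  simp only [empDist, ← sum_div, card_eq_sum_ones, Nat.cast_sum, sum_filter]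
  rw [sum_comm]
  congr 1
  refine sum_congr rfl fun k _ => ?_
  simp only [Nat.cast_ite, Nat.cast_one, Nat.cast_zero, sum_ite_eq, Set.indicator_apply, mem_coe,
    Pi.one_apply]

lemma sum_empDist_univ [DecidableEq γ] {Ω : Type*} {n : ℕ} (hn : 0 < n) (Z : Fin n → Ω → γ)
    (ω : Ω) :
    ∑ a, empDist Z ω a = 1 := by
  rw [sum_empDist, coe_univ]
  simp [hn.ne']

end Deviation

section Sampling

variable {γ : Type*} [Fintype γ] [MeasurableSpace γ] [MeasurableSingletonClass γ]
  {Ω : Type*} [MeasurableSpace Ω] {μ : Measure Ω}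

lemma distMeasure_real_apply {p : γ → ℝ} (hp : ∀ a, 0 ≤ p a) (A : Finset γ) :
    (distMeasure p).real A = ∑ a ∈ A, p a := by
  classical
  rw [measureReal_def, distMeasure, Measure.coe_finsetSum, Finset.sum_apply]
  simp only [Measure.smul_apply, smul_eq_mul, A.measurableSet, Measure.dirac_apply',
    Set.indicator_apply, mem_coe, Pi.one_apply, mul_ite, mul_one, mul_zero, ← sum_filter,
    filter_mem_eq_inter, univ_inter]
  rw [ENNReal.toReal_sum fun a _ => ENNReal.ofReal_ne_top]
  exact sum_congr rfl fun a _ => ENNReal.toReal_ofReal (hp a)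

lemma measureReal_sum_indicator_sub_ge_le {ι : Type*} [Fintype ι] {Z : ι → Ω → γ}
    (hmeas : ∀ k, Measurable (Z k)) (hindep : iIndepFun Z μ) {p : γ → ℝ} (hp : ∀ a, 0 ≤ p a)
    (hdist : ∀ k, μ.map (Z k) = distMeasure p) (A : Finset γ) {t : ℝ} (ht : 0 ≤ t) :
    μ.real {ω | t ≤ ∑ k, ((A : Set γ).indicator 1 (Z k ω) - ∑ a ∈ A, p a)}
      ≤ exp (-2 * t ^ 2 / Fintype.card ι) := by
  have := hindep.isProbabilityMeasure
  have hind : Measurable ((A : Set γ).indicator (1 : γ → ℝ)) := measurable_of_countable _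
  have hsubG (k : ι) : HasSubgaussianMGF (fun ω => (A : Set γ).indicator 1 (Z k ω) - ∑ a ∈ A, p a)
      ((‖(1 : ℝ) - 0‖₊ / 2) ^ 2) μ := by
    have hmean : μ[fun ω => (A : Set γ).indicator 1 (Z k ω)] = ∑ a ∈ A, p a := by
      rw [← integral_map (hmeas k).aemeasurable hind.aestronglyMeasurable, hdist,
        integral_indicator_one A.measurableSet, distMeasure_real_apply hp]
    rw [← hmean]
    refine hasSubgaussianMGF_of_mem_Icc (hind.comp (hmeas k)).aemeasurable
      (ae_of_all _ fun ω => ?_)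
    by_cases h : Z k ω ∈ (A : Set γ) <;> simp [h]
  have hcentered : iIndepFun (fun k ω => (A : Set γ).indicator 1 (Z k ω) - ∑ a ∈ A, p a) μ :=
    hindep.comp (fun _ x => (A : Set γ).indicator 1 x - ∑ a ∈ A, p a)
      fun _ => measurable_of_countable _
  refine (HasSubgaussianMGF.measure_sum_ge_le_of_iIndepFun hcentered (fun k _ => hsubG k)
    ht).trans_eq ?_
  congr 1
  simp only [sub_zero, nnnorm_one, one_div, inv_pow, sum_const, card_univ, nsmul_eq_mul,
    NNReal.coe_mul, NNReal.coe_natCast, NNReal.coe_inv, NNReal.coe_pow, NNReal.coe_ofNat]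
  field_simp

theorem measureReal_Vdist_empDist_gt_le [DecidableEq γ] {n : ℕ} (hn : 0 < n)
    {Z : Fin n → Ω → γ} (hmeas : ∀ k, Measurable (Z k)) (hindep : iIndepFun Z μ)
    {p : γ → ℝ} (hp : IsDist p) (hdist : ∀ k, μ.map (Z k) = distMeasure p) {ε : ℝ}
    (hε : 0 ≤ ε) :
    μ.real {ω | ε < Vdist (empDist Z ω) p}
      ≤ (2 ^ Fintype.card γ - 2 : ℕ) * exp (-n * ε ^ 2 / 2) := by
  have := hindep.isProbabilityMeasure
  have := hp.nonempty
  set S := (univ.powerset.erase ∅).erase (univ : Finset γ)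
  set B : Finset γ → Set Ω := fun A =>
    {ω | n * ε / 2 ≤ ∑ k, ((A : Set γ).indicator 1 (Z k ω) - ∑ a ∈ A, p a)}
  have hsub : {ω | ε < Vdist (empDist Z ω) p} ⊆ ⋃ A ∈ S, B A := by
    intro ω hω
    obtain ⟨A, hA, hlt⟩ :=
      exists_nontrivial_subset_lt_sum_sub ((sum_empDist_univ hn Z ω).trans hp.2.symm) hε hω
    refine Set.mem_biUnion hA ?_
    have hn' : (0 : ℝ) < n := Nat.cast_pos.2 hn
    rw [sum_sub_distrib, sum_empDist, lt_sub_iff_add_lt, lt_div_iff₀ hn'] at hlt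
    simp only [B, Set.mem_ofPred_eq, sum_sub_distrib, sum_const, card_univ, Fintype.card_fin,
      nsmul_eq_mul]
    nlinarith
  calc μ.real {ω | ε < Vdist (empDist Z ω) p}
      ≤ μ.real (⋃ A ∈ S, B A) := measureReal_mono hsub (measure_ne_top _ _)
    _ ≤ ∑ A ∈ S, μ.real (B A) := measureReal_biUnion_finset_le S B
    _ ≤ ∑ A ∈ S, exp (-n * ε ^ 2 / 2) := by
      refine sum_le_sum fun A _ =>
        (measureReal_sum_indicator_sub_ge_le hmeas hindep hp.1 hdist A (by positivity)).trans_eq ?_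
      congr 1
      simp only [neg_mul, Fintype.card_fin]
      field_simp
    _ = (2 ^ Fintype.card γ - 2 : ℕ) * exp (-n * ε ^ 2 / 2) := by
      rw [sum_const, card_nontrivial_subsets, nsmul_eq_mul]

end Sampling

lemma one_sub_measureReal_le_of_compl_subset {Ω : Type*} [MeasurableSpace Ω] {μ : Measure Ω}
    [IsProbabilityMeasure μ] {s t : Set Ω} (h : tᶜ ⊆ s) : 1 - μ.real t ≤ μ.real s := by
  have : 1 ≤ μ.real t + μ.real s :=
    calc 1 = μ.real (t ∪ tᶜ) := by simp
      _ ≤ μ.real t + μ.real tᶜ := measureReal_union_le _ _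
      _ ≤ μ.real t + μ.real s := add_le_add_right (measureReal_mono h (measure_ne_top μ s)) _
  linarith

lemma mul_exp_neg_max_log_div_le {c α : ℝ} (hc : 0 ≤ c) (hα : 0 < α) :
    c * exp (-max (log (c / α)) 0) ≤ α := by
  rcases hc.eq_or_lt with rfl | hc
  · simpa using hα.le
  rcases le_total (log (c / α)) 0 with hlog | hlog
  · rw [max_eq_right hlog, neg_zero, exp_zero, mul_one]
    rwa [log_nonpos_iff (by positivity), div_le_one hα] at hlog
  · rw [max_eq_left hlog, exp_neg, exp_log (by positivity), inv_div, mul_div_cancel₀ _ hc.ne']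

theorem mutInfo_confidence_interval_optimized_general {Mx My : ℕ}
    (p : Fin Mx × Fin My → ℝ) (hp : IsDist p)
    (α : ℝ) (hα : α ∈ Set.Ioc (0 : ℝ) 1)
    {Ω : Type*} [MeasurableSpace Ω] (μ : Measure Ω)
    {n : ℕ} (hn : 0 < n) (Z : Fin n → Ω → Fin Mx × Fin My)
    (hmeas : ∀ k, Measurable (Z k))
    (hindep : ProbabilityTheory.iIndepFun Z μ)
    (hdist : ∀ k, Measure.map (Z k) μ = distMeasure p)
    (ε : ℝ) (hε : ε = Real.sqrt (2 / (n : ℝ) * Real.log (((2 : ℝ) ^ (Mx * My) - 2) / α))) :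
    (μ {ω |
      (sInf {x : ℝ | ∃ r : Fin Mx → ℝ,
          IsDist r ∧ Vdist (margX (empDist Z ω)) r ≤ ε ∧ x = entropy r} +
        sInf {x : ℝ | ∃ r : Fin My → ℝ,
          IsDist r ∧ Vdist (margY (empDist Z ω)) r ≤ ε ∧ x = entropy r} -
        sSup {x : ℝ | ∃ s : Fin Mx × Fin My → ℝ,
          IsDist s ∧ Vdist (empDist Z ω) s ≤ ε ∧ x = entropy s} ≤ mutInfo p) ∧
      (mutInfo p ≤
        sSup {x : ℝ | ∃ r : Fin Mx → ℝ,
          IsDist r ∧ Vdist (margX (empDist Z ω)) r ≤ ε ∧ x = entropy r} +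
        sSup {x : ℝ | ∃ r : Fin My → ℝ,
          IsDist r ∧ Vdist (margY (empDist Z ω)) r ≤ ε ∧ x = entropy r} -
        sInf {x : ℝ | ∃ s : Fin Mx × Fin My → ℝ,
          IsDist s ∧ Vdist (empDist Z ω) s ≤ ε ∧ x = entropy s})}).toReal ≥ 1 - α := by
  have := hindep.isProbabilityMeasure
  have hM : 0 < Mx * My := by simpa using Fintype.card_pos_iff.2 hp.nonempty
  set c : ℝ := 2 ^ (Mx * My) - 2
  have hc : ((2 ^ Fintype.card (Fin Mx × Fin My) - 2 : ℕ) : ℝ) = c := by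
    simp [Nat.cast_sub (Nat.le_self_pow hM.ne' 2), c]
  -- `Real.sqrt` sends negative arguments to `0`, hence the `max`; this also covers `Mx * My = 1`,
  -- where `c = 0` and `log 0 = 0`.
  have hexp : -(n : ℝ) * ε ^ 2 / 2 = -max (log (c / α)) 0 := by
    have hn' : (0 : ℝ) < n := Nat.cast_pos.2 hn
    rw [hε, sq_sqrt', neg_mul, neg_div, neg_inj, mul_comm, mul_div_assoc,
      max_mul_of_nonneg _ _ (by positivity), zero_mul]
    congr 1
    field_simp
  have hbad : μ.real {ω | ε < Vdist (empDist Z ω) p} ≤ α :=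
    calc μ.real {ω | ε < Vdist (empDist Z ω) p}
        ≤ (2 ^ Fintype.card (Fin Mx × Fin My) - 2 : ℕ) * exp (-n * ε ^ 2 / 2) :=
          measureReal_Vdist_empDist_gt_le hn hmeas hindep hp hdist (hε ▸ sqrt_nonneg _)
      _ = c * exp (-max (log (c / α)) 0) := by rw [hc, hexp]
      _ ≤ α := mul_exp_neg_max_log_div_le (hc ▸ Nat.cast_nonneg _) hα.1
  refine (sub_le_sub_left hbad 1).trans (one_sub_measureReal_le_of_compl_subset fun ω hω => ?_)
  exact mutInfo_bounds_of_Vdist_le hp (not_lt.1 hω)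

/-- Theorem 4: improved confidence interval via entropy optimization.
With `ε = sqrt((2/n)·ln((2^(Mx·My)-2)/α))` and the (sample-dependent) bounds
`I_min`, `I_max` obtained by optimizing entropies over `ε`-neighborhoods (in variational
distance) of the empirical marginals and the empirical joint distribution, the interval
`[I_min, I_max]` contains `I(p)` with probability at least `1 - α`. -/
theorem mutInfo_confidence_interval_optimized {Mx My : ℕ}
    (p : Fin Mx × Fin My → ℝ) (hp : IsDist p)
    (α : ℝ) (hα : α ∈ Set.Ioc (0 : ℝ) 1)
    {Ω : Type*} [MeasurableSpace Ω] (μ : Measure Ω) [IsProbabilityMeasure μ]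
    {n : ℕ} (hn : 0 < n) (Z : Fin n → Ω → Fin Mx × Fin My)
    (hmeas : ∀ k, Measurable (Z k))
    (hindep : ProbabilityTheory.iIndepFun Z μ)
    (hdist : ∀ k, Measure.map (Z k) μ = distMeasure p)
    (ε : ℝ) (hε : ε = Real.sqrt (2 / (n : ℝ) * Real.log (((2 : ℝ) ^ (Mx * My) - 2) / α))) :
    (μ {ω |
      (sInf {x : ℝ | ∃ r : Fin Mx → ℝ,
          IsDist r ∧ Vdist (margX (empDist Z ω)) r ≤ ε ∧ x = entropy r} +
        sInf {x : ℝ | ∃ r : Fin My → ℝ,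
          IsDist r ∧ Vdist (margY (empDist Z ω)) r ≤ ε ∧ x = entropy r} -
        sSup {x : ℝ | ∃ s : Fin Mx × Fin My → ℝ,
          IsDist s ∧ Vdist (empDist Z ω) s ≤ ε ∧ x = entropy s} ≤ mutInfo p) ∧
      (mutInfo p ≤
        sSup {x : ℝ | ∃ r : Fin Mx → ℝ,
          IsDist r ∧ Vdist (margX (empDist Z ω)) r ≤ ε ∧ x = entropy r} +
        sSup {x : ℝ | ∃ r : Fin My → ℝ,
          IsDist r ∧ Vdist (margY (empDist Z ω)) r ≤ ε ∧ x = entropy r} -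
        sInf {x : ℝ | ∃ s : Fin Mx × Fin My → ℝ,
          IsDist s ∧ Vdist (empDist Z ω) s ≤ ε ∧ x = entropy s})}).toReal ≥ 1 - α :=
  mutInfo_confidence_interval_optimized_general p hp α hα μ hn Z hmeas hindep hdist ε hε
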